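/- arXiv:2510.17618 — 3 statements merged into one kernel-verified Lean document; each statement's English description precedes it below -/
import Mathlib

section
/- Let D ⊆ ℂⁿ be a nonempty open, connected and simply connected set, let h : ℂⁿ → ℂ be holomorphic on D with h(z) ≠ 0 for every z ∈ D, and let s ∈ ℝ. Then there exists a function g : ℂⁿ → ℂ, holomorphic on D and nowhere zero on D, such that |g(z)| = |h(z)|^s for every z ∈ D. -/
open Complex Set

private lemma ratio_mem_ball {w v : ℂ} (hv : v ≠ 0) (h : ‖w - v‖ < ‖v‖) :
    w / v ∈ Metric.ball (1:ℂ) 1 := by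
  rw [Metric.mem_ball, dist_eq_norm, div_sub_one hv, norm_div]
  exact div_lt_one (norm_pos_iff.2 hv) |>.2 h

private lemma telescope_prod (G : ℕ → ℂ) (hG : ∀ j, G j ≠ 0) (N : ℕ) :
    ∏ j ∈ Finset.range N, G (j+1) / G j = G N / G 0 := by
  induction N with
  | zero => simp [div_self (hG 0)]
  | succ N ih =>
      rw [Finset.prod_range_succ, ih, div_mul_div_comm, mul_comm,
        mul_div_mul_right _ _ (hG N)]

/-- Existence of a lift of a uniformly continuous nonvanishing map through `exp`. -/
private lemma lift_exists (p : ℝ → ℂ) (hp : UniformContinuous p) {ε : ℝ} (hε : 0 < ε)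
    (hlb : ∀ t, ε ≤ ‖p t‖) (a : ℂ) (ha : Complex.exp a = p 0) :
    ∃ q : ℝ → ℂ, Continuous q ∧ q 0 = a ∧ ∀ t ∈ Icc (0:ℝ) 1, Complex.exp (q t) = p t := by
  have pnz : ∀ t, p t ≠ 0 := fun t => norm_pos_iff.1 (lt_of_lt_of_le hε (hlb t))
  obtain ⟨δ, hδpos, hδ⟩ := Metric.uniformContinuous_iff.1 hp ε hε
  set c : ℝ := δ / 2 with hc
  have hcpos : 0 < c := by positivity
  obtain ⟨N, hN⟩ := exists_nat_ge (1 / c)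
  have hNc : (1:ℝ) ≤ N * c := by
    rw [div_le_iff₀ hcpos] at hN
    linarith
  -- the ratios are in the ball of radius 1 around 1
  have key : ∀ (u v : ℝ), |u - v| ≤ c → p u / p v ∈ Metric.ball (1:ℂ) 1 := by
    intro u v huv
    refine ratio_mem_ball (pnz v) (lt_of_lt_of_le ?_ (hlb v))
    have : dist u v < δ := by
      rw [Real.dist_eq]
      linarith
    simpa [dist_eq_norm] using hδ this
  have minlip : ∀ t x y : ℝ, |min t x - min t y| ≤ |x - y| := by
    intro t x y
    simp only [min_def]
    split_ifs <;> rw [abs_le] <;> constructor <;>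
      cases abs_cases (x - y) <;> linarith
  set R : ℝ → ℕ → ℂ := fun t j => p (min t (((j:ℝ)+1) * c)) / p (min t ((j:ℝ) * c)) with hR
  have hRball : ∀ t j, R t j ∈ Metric.ball (1:ℂ) 1 := by
    intro t j
    refine key _ _ ?_
    have : |min t (((j:ℝ)+1) * c) - min t ((j:ℝ)*c)| ≤ |((j:ℝ)+1) * c - (j:ℝ)*c| :=
      minlip _ _ _
    calc |min t (((j:ℝ)+1) * c) - min t ((j:ℝ)*c)| ≤ |((j:ℝ)+1) * c - (j:ℝ)*c| := this
    _ = c := by rw [← sub_mul]; simp [abs_of_pos hcpos]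
  have hRnz : ∀ t j, R t j ≠ 0 := fun t j => div_ne_zero (pnz _) (pnz _)
  refine ⟨fun t => a + ∑ j ∈ Finset.range N, Complex.log (R t j), ?_, ?_, ?_⟩
  · refine continuous_const.add (continuous_finset_sum _ fun j _ => ?_)
    rw [continuous_iff_continuousAt]
    intro t
    refine ContinuousAt.clog ?_ (ball_one_subset_slitPlane (hRball t j))
    exact ContinuousAt.div
      ((hp.continuous.comp (continuous_id.min continuous_const)).continuousAt)
      ((hp.continuous.comp (continuous_id.min continuous_const)).continuousAt)
      (pnz _)
  · have : ∀ j : ℕ, R 0 j = 1 := by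
      intro j
      have h1 : min (0:ℝ) (((j:ℝ)+1) * c) = 0 := min_eq_left (by positivity)
      have h2 : min (0:ℝ) ((j:ℝ) * c) = 0 := min_eq_left (by positivity)
      rw [hR]; simp only [h1, h2]
      exact div_self (pnz 0)
    simp [this]
  · intro t ht
    rw [Complex.exp_add, Complex.exp_sum]
    have : ∀ j ∈ Finset.range N, Complex.exp (Complex.log (R t j)) = R t j :=
      fun j _ => Complex.exp_log (hRnz t j)
    rw [Finset.prod_congr rfl this, ha]
    have := telescope_prod (fun j => p (min t ((j:ℝ) * c))) (fun j => pnz _) N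
    simp only [hR]
    push_cast at this ⊢
    rw [this, min_eq_left (le_trans ht.2 hNc), zero_mul, min_eq_right ht.1, mul_comm,
      div_mul_cancel₀ _ (pnz 0)]
private lemma lift_unique {q₁ q₂ : ℝ → ℂ} (h₁ : Continuous q₁) (h₂ : Continuous q₂)
    (hexp : ∀ t ∈ Icc (0:ℝ) 1, Complex.exp (q₁ t) = Complex.exp (q₂ t))
    (h0 : q₁ 0 = q₂ 0) : ∀ t ∈ Icc (0:ℝ) 1, q₁ t = q₂ t := by
  haveI : PreconnectedSpace (Icc (0:ℝ) 1) :=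
    Subtype.preconnectedSpace isPreconnected_Icc
  set d : Icc (0:ℝ) 1 → ℂ := fun x => q₁ ↑x - q₂ ↑x with hd
  have hdc : Continuous d := (h₁.comp continuous_subtype_val).sub
    (h₂.comp continuous_subtype_val)
  have hd1 : ∀ x, ∃ m : ℤ, d x = m * (2 * Real.pi * I) := by
    intro x
    rw [← Complex.exp_eq_one_iff, hd, Complex.exp_sub,
      hexp ↑x x.2, div_self (Complex.exp_ne_zero _)]
  have hset : {x : Icc (0:ℝ) 1 | d x = 0} = {x | ‖d x‖ < 2 * Real.pi} := by
    ext x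
    simp only [mem_setOf_eq]
    constructor
    · intro hx
      rw [hx, norm_zero]
      positivity
    · intro hx
      obtain ⟨m, hm⟩ := hd1 x
      rcases eq_or_ne m 0 with h | h
      · simpa [h] using hm
      · exfalso
        rw [hm] at hx
        have hnorm : ‖(m : ℂ) * (2 * Real.pi * I)‖ = |(m:ℝ)| * (2 * Real.pi) := by
          simp [norm_mul, abs_of_pos Real.pi_pos]
        rw [hnorm] at hx
        have : (1:ℝ) ≤ |(m:ℝ)| := by
          rw [← Int.cast_abs]
          exact_mod_cast Int.one_le_abs (by exact_mod_cast h)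
        nlinarith [Real.pi_pos]
  have hclopen : IsClopen {x : Icc (0:ℝ) 1 | d x = 0} := by
    constructor
    · exact isClosed_eq hdc continuous_const
    · rw [hset]
      exact isOpen_lt (hdc.norm) continuous_const
  have h0' : (⟨0, by norm_num⟩ : Icc (0:ℝ) 1) ∈ {x : Icc (0:ℝ) 1 | d x = 0} := by
    simp only [mem_setOf_eq, hd, sub_eq_zero]
    exact h0
  have := (isClopen_iff.1 hclopen).resolve_left (by
    intro hh; rw [hh] at h0'; exact h0')
  intro t ht
  have : (⟨t, ht⟩ : Icc (0:ℝ) 1) ∈ {x : Icc (0:ℝ) 1 | d x = 0} := this ▸ mem_univ _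
  simpa [hd, sub_eq_zero] using this

private lemma pathLift (g : unitInterval → ℂ) (hg : Continuous g) (hg0 : ∀ t, g t ≠ 0)
    (a : ℂ) (ha : Complex.exp a = g 0) :
    ∃ q : ℝ → ℂ, Continuous q ∧ q 0 = a ∧
      ∀ t : unitInterval, Complex.exp (q ↑t) = g t := by
  set p : ℝ → ℂ := fun u => g (Set.projIcc 0 1 zero_le_one u) with hp
  have hpc : UniformContinuous p :=
    (CompactSpace.uniformContinuous_of_continuous hg).comp
      (LipschitzWith.projIcc zero_le_one).uniformContinuous
  obtain ⟨t₀, -, ht₀⟩ := isCompact_univ.exists_isMinOn univ_nonempty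
    (hg.norm.continuousOn (s := univ))
  rw [isMinOn_iff] at ht₀
  have hε : 0 < ‖g t₀‖ := norm_pos_iff.2 (hg0 t₀)
  have hlb : ∀ u, ‖g t₀‖ ≤ ‖p u‖ := fun u => ht₀ _ (mem_univ _)
  have hp0 : p 0 = g 0 := by rw [hp]; simp
  obtain ⟨q, hqc, hq0, hqe⟩ := lift_exists p hpc hε hlb a (by rw [hp0]; exact ha)
  refine ⟨q, hqc, hq0, fun t => ?_⟩
  have := hqe ↑t t.2
  rw [this, hp]
  simp only
  rw [projIcc_val zero_le_one t]

private lemma liftEnd_eq_of_homotopic {X : Type*} [TopologicalSpace X] (f : X → ℂ)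
    (hf : Continuous f) (hf0 : ∀ x, f x ≠ 0) {x y : X} (γ₀ γ₁ : Path x y)
    (hhom : γ₀.Homotopic γ₁) (a : ℂ) {q₀ q₁ : ℝ → ℂ}
    (hc₀ : Continuous q₀) (hc₁ : Continuous q₁)
    (h0₀ : q₀ 0 = a) (h0₁ : q₁ 0 = a)
    (he₀ : ∀ t : unitInterval, Complex.exp (q₀ ↑t) = f (γ₀ t))
    (he₁ : ∀ t : unitInterval, Complex.exp (q₁ ↑t) = f (γ₁ t)) :
    q₀ 1 = q₁ 1 := by
  obtain ⟨H⟩ := hhom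
  have hax : Complex.exp a = f x := by
    have := he₀ 0
    rw [← h0₀]
    simpa using this
  -- choose a lift for each parameter value
  have hex : ∀ s : unitInterval, ∃ q : ℝ → ℂ, Continuous q ∧ q 0 = a ∧
      ∀ t : unitInterval, Complex.exp (q ↑t) = f ((H.eval s) t) := by
    intro s
    refine pathLift _ (hf.comp (H.eval s).continuous) (fun t => hf0 _) a ?_
    rw [hax]
    congr 1
    exact ((H.eval s).source).symm
  choose Q hQc hQ0 hQe using hex
  -- the endpoint map is locally constant
  have heval : ∀ (s t : unitInterval), (H.eval s) t = H (s, t) := fun s t => rfl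
  set Ψ : unitInterval × unitInterval → ℂ := fun st => f (H st) with hΨ
  have hΨc : Continuous Ψ := hf.comp H.continuous
  obtain ⟨st₀, -, hst₀⟩ := isCompact_univ.exists_isMinOn univ_nonempty
    (hΨc.norm.continuousOn (s := univ))
  rw [isMinOn_iff] at hst₀
  have hε : 0 < ‖Ψ st₀‖ := norm_pos_iff.2 (hf0 _)
  obtain ⟨δ, hδpos, hδ⟩ := Metric.uniformContinuous_iff.1
    (CompactSpace.uniformContinuous_of_continuous hΨc) _ hε
  have key : ∀ s₀ s : unitInterval, dist s s₀ < δ → Q s 1 = Q s₀ 1 := by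
    intro s₀ s hs
    have hratio : ∀ t : unitInterval, Ψ (s, t) / Ψ (s₀, t) ∈ Metric.ball (1:ℂ) 1 := by
      intro t
      refine ratio_mem_ball (hf0 _) (lt_of_lt_of_le ?_ (hst₀ _ (mem_univ _)))
      have hd : dist ((s, t) : unitInterval × unitInterval) (s₀, t) < δ := by
        rw [Prod.dist_eq, dist_self]
        exact max_lt hs hδpos
      simpa [dist_eq_norm] using hδ hd
    set pr : ℝ → unitInterval := Set.projIcc 0 1 zero_le_one with hpr
    set q' : ℝ → ℂ := fun u => Q s₀ u + Complex.log (Ψ (s, pr u) / Ψ (s₀, pr u)) with hq'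
    have hq'c : Continuous q' := by
      refine (hQc s₀).add ?_
      rw [continuous_iff_continuousAt]
      intro u
      refine ContinuousAt.clog ?_ (Complex.ball_one_subset_slitPlane (hratio _))
      refine ContinuousAt.div ?_ ?_ (hf0 _)
      · exact (hΨc.comp ((continuous_const.prodMk
          (continuous_projIcc)) : Continuous fun u : ℝ => ((s, pr u)))).continuousAt
      · exact (hΨc.comp ((continuous_const.prodMk
          (continuous_projIcc)) : Continuous fun u : ℝ => ((s₀, pr u)))).continuousAt
    have hq'0 : q' 0 = a := by
      rw [hq']
      simp only [hpr]
      rw [projIcc_left]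
      have h1 : Ψ (s, (⟨0, by norm_num⟩ : unitInterval)) = f x := by
        rw [hΨ]
        simp only
        have : H ((s : unitInterval), (⟨0, by norm_num⟩ : unitInterval)) = x := H.source s
        rw [this]
      have h2 : Ψ (s₀, (⟨0, by norm_num⟩ : unitInterval)) = f x := by
        rw [hΨ]
        simp only
        have : H ((s₀ : unitInterval), (⟨0, by norm_num⟩ : unitInterval)) = x := H.source s₀
        rw [this]
      rw [h1, h2, div_self (hf0 x), Complex.log_one, add_zero, hQ0]
    -- q' is also a lift of the path at parameter s
    have hexp_eq : ∀ u ∈ Icc (0:ℝ) 1, Complex.exp (Q s u) = Complex.exp (q' u) := by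
      intro u hu
      have hpru : pr u = ⟨u, hu⟩ := by
        rw [hpr]; exact projIcc_of_mem zero_le_one hu
      rw [hq', Complex.exp_add]
      have h1 : Complex.exp (Q s u) = Ψ (s, ⟨u, hu⟩) := by
        have := hQe s ⟨u, hu⟩
        rw [heval] at this
        exact this
      have h2 : Complex.exp (Q s₀ u) = Ψ (s₀, ⟨u, hu⟩) := by
        have := hQe s₀ ⟨u, hu⟩
        rw [heval] at this
        exact this
      rw [h1, h2, hpru, Complex.exp_log (div_ne_zero (hf0 _) (hf0 _)),
        mul_comm, div_mul_cancel₀ _ (hf0 _)]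
    have huniq := lift_unique (hQc s) hq'c hexp_eq (by rw [hQ0, hq'0])
    have h1 : Q s 1 = q' 1 := huniq 1 (by norm_num)
    rw [h1]
    show Q s₀ 1 + Complex.log (Ψ (s, pr 1) / Ψ (s₀, pr 1)) = Q s₀ 1
    have hpr1 : pr 1 = 1 := by rw [hpr]; simp [projIcc_of_mem, unitInterval]
    have hy1 : Ψ (s, pr 1) = f y := by
      rw [hΨ, hpr1]
      simp only
      have : H ((s : unitInterval), (1 : unitInterval)) = y := H.target s
      rw [this]
    have hy2 : Ψ (s₀, pr 1) = f y := by
      rw [hΨ, hpr1]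
      simp only
      have : H ((s₀ : unitInterval), (1 : unitInterval)) = y := H.target s₀
      rw [this]
    rw [hy1, hy2, div_self (hf0 y), Complex.log_one, add_zero]

  -- conclude by local constancy
  haveI : PreconnectedSpace unitInterval := Subtype.preconnectedSpace isPreconnected_Icc
  have hlc : IsLocallyConstant (fun s : unitInterval => Q s 1) := by
    rw [IsLocallyConstant.iff_eventually_eq]
    intro s₀
    have : Metric.ball s₀ δ ∈ nhds s₀ := Metric.ball_mem_nhds _ hδpos
    filter_upwards [this] with s hs
    exact key s₀ s hs
  have hconst := hlc.apply_eq_of_preconnectedSpace 0 1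
  -- identify Q 0, Q 1 with q₀, q₁
  have hid0 : q₀ 1 = Q 0 1 := by
    have huniq := lift_unique hc₀ (hQc 0) ?_ (by rw [h0₀, hQ0])
    · exact huniq 1 (by norm_num)
    · intro u hu
      have h1 := he₀ ⟨u, hu⟩
      have h2 := hQe 0 ⟨u, hu⟩
      rw [heval] at h2
      rw [h1, h2]
      congr 1
      have : H.eval 0 = γ₀ := H.eval_zero
      rw [← heval, this]
  have hid1 : q₁ 1 = Q 1 1 := by
    have huniq := lift_unique hc₁ (hQc 1) ?_ (by rw [h0₁, hQ0])
    · exact huniq 1 (by norm_num)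
    · intro u hu
      have h1 := he₁ ⟨u, hu⟩
      have h2 := hQe 1 ⟨u, hu⟩
      rw [heval] at h2
      rw [h1, h2]
      congr 1
      have : H.eval 1 = γ₁ := H.eval_one
      rw [← heval, this]
  rw [hid0, hid1, hconst]



/-- On a nonempty open, connected and simply connected set `D ⊆ ℂⁿ`, given a
holomorphic nowhere-zero function `h` and `s ∈ ℝ`, there is a holomorphic
nowhere-zero function `g` on `D` with `|g(z)| = |h(z)|^s` on `D`. -/
theorem holomorphic_real_power_exists (n : ℕ) (D : Set (Fin n → ℂ))
    (hne : D.Nonempty) (hopen : IsOpen D) (hconn : IsConnected D)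
    (hsc : SimplyConnectedSpace D)
    (h : (Fin n → ℂ) → ℂ) (hh : DifferentiableOn ℂ h D)
    (hz : ∀ z ∈ D, h z ≠ 0) (s : ℝ) :
    ∃ g : (Fin n → ℂ) → ℂ, DifferentiableOn ℂ g D ∧
      (∀ z ∈ D, g z ≠ 0) ∧
      ∀ z ∈ D, ‖g z‖ = ‖h z‖ ^ s := by
  classical
  haveI := hsc
  obtain ⟨z₀, hz₀⟩ := hne
  haveI hpcs : PathConnectedSpace ↥D :=
    isPathConnected_iff_pathConnectedSpace.mp
      (hopen.isConnected_iff_isPathConnected.mp hconn)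
  set f : ↥D → ℂ := fun x => h ↑x with hf
  have hfc : Continuous f := hh.continuousOn.restrict
  have hf0 : ∀ x : ↥D, f x ≠ 0 := fun x => hz ↑x x.2
  set b : ↥D := ⟨z₀, hz₀⟩ with hb
  have hexB : Complex.exp (Complex.log (f b)) = f b := Complex.exp_log (hf0 b)
  have hex : ∀ x : ↥D, ∃ q : ℝ → ℂ, Continuous q ∧ q 0 = Complex.log (f b) ∧
      ∀ t : unitInterval, Complex.exp (q ↑t) = f ((PathConnectedSpace.somePath b x) t) := by
    intro x
    refine pathLift _ (hfc.comp (PathConnectedSpace.somePath b x).continuous)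
      (fun t => hf0 _) _ ?_
    rw [hexB]
    congr 1
    exact ((PathConnectedSpace.somePath b x).source).symm
  choose Q hQc hQ0 hQe using hex
  set F : ↥D → ℂ := fun x => Q x 1 with hF
  have keyWD : ∀ (x : ↥D) (γ : Path b x) (q : ℝ → ℂ), Continuous q →
      q 0 = Complex.log (f b) → (∀ t : unitInterval, Complex.exp (q ↑t) = f (γ t)) →
      q 1 = F x := by
    intro x γ q hc hq0 hqe
    exact liftEnd_eq_of_homotopic f hfc hf0 γ (PathConnectedSpace.somePath b x)
      (SimplyConnectedSpace.paths_homotopic γ _) (Complex.log (f b)) hc (hQc x)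
      hq0 (hQ0 x) hqe (hQe x)
  set ℓ : (Fin n → ℂ) → ℂ := fun z => if hz' : z ∈ D then F ⟨z, hz'⟩ else 0 with hℓ
  have hℓD : ∀ z (hz' : z ∈ D), ℓ z = F ⟨z, hz'⟩ := fun z hz' => dif_pos hz'
  have hcoe1 : ((1 : unitInterval) : ℝ) = (1:ℝ) := rfl
  have hQe1 : ∀ x : ↥D, Complex.exp (Q x 1) = f x := by
    intro x
    have := hQe x 1
    rw [hcoe1] at this
    rw [this, Path.target]
  have hexpℓ : ∀ z ∈ D, Complex.exp (ℓ z) = h z := by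
    intro z hz'
    rw [hℓD z hz', hF]
    exact hQe1 ⟨z, hz'⟩
  -- the local formula for ℓ
  have localF : ∀ z₁ (hz₁ : z₁ ∈ D), ∃ r > 0, Metric.ball z₁ r ⊆ D ∧
      ∀ z ∈ Metric.ball z₁ r, ℓ z = ℓ z₁ + Complex.log (h z / h z₁) := by
    intro z₁ hz₁
    have hcont : ContinuousAt h z₁ :=
      (hh.continuousOn z₁ hz₁).continuousAt (hopen.mem_nhds hz₁)
    have hpos : 0 < ‖h z₁‖ := norm_pos_iff.2 (hz z₁ hz₁)
    obtain ⟨r₁, hr₁, hball₁⟩ := Metric.continuousAt_iff.1 hcont _ hpos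
    obtain ⟨r₂, hr₂, hball₂⟩ := Metric.isOpen_iff.1 hopen z₁ hz₁
    refine ⟨min r₁ r₂, lt_min hr₁ hr₂, ?_, ?_⟩
    · exact fun w hw => hball₂ (Metric.ball_subset_ball (min_le_right _ _) hw)
    intro z hzb
    have hzD : z ∈ D := hball₂ (Metric.ball_subset_ball (min_le_right _ _) hzb)
    have hnear : ∀ w, dist w z₁ < min r₁ r₂ → ‖h w - h z₁‖ < ‖h z₁‖ := by
      intro w hw
      have := hball₁ (lt_of_lt_of_le hw (min_le_left _ _))
      rwa [dist_eq_norm] at this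
    -- the straight segment from z₁ to z, inside the ball
    have hmem : ∀ t : unitInterval, z₁ + (t:ℝ) • (z - z₁) ∈ Metric.ball z₁ (min r₁ r₂) := by
      intro t
      rw [Metric.mem_ball, dist_eq_norm, add_sub_cancel_left, norm_smul]
      calc ‖(t:ℝ)‖ * ‖z - z₁‖ ≤ 1 * ‖z - z₁‖ := by
            apply mul_le_mul_of_nonneg_right _ (norm_nonneg _)
            rw [Real.norm_eq_abs, _root_.abs_of_nonneg t.2.1]
            exact t.2.2
      _ = ‖z - z₁‖ := one_mul _
      _ < min r₁ r₂ := by rw [← dist_eq_norm]; exact hzb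
    have hmemD : ∀ t : unitInterval, z₁ + (t:ℝ) • (z - z₁) ∈ D :=
      fun t => hball₂ (Metric.ball_subset_ball (min_le_right _ _) (hmem t))
    set σ : Path (⟨z₁, hz₁⟩ : ↥D) ⟨z, hzD⟩ :=
      { toFun := fun t => ⟨z₁ + (t:ℝ) • (z - z₁), hmemD t⟩
        continuous_toFun := by
          apply Continuous.subtype_mk
          exact continuous_const.add
            ((continuous_subtype_val.smul continuous_const) :
              Continuous fun t : unitInterval => (t:ℝ) • (z - z₁))
        source' := by
          apply Subtype.ext
          simp
        target' := by
          apply Subtype.ext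
          simp } with hσ
    have hσcoe : ∀ t : unitInterval, ((σ t : ↥D) : Fin n → ℂ) = z₁ + (t:ℝ) • (z - z₁) :=
      fun t => rfl
    set γ : Path b (⟨z₁, hz₁⟩ : ↥D) := PathConnectedSpace.somePath b ⟨z₁, hz₁⟩ with hγ
    set q : ℝ → ℂ := Q ⟨z₁, hz₁⟩ with hq
    have hq1 : Complex.exp (q 1) = h z₁ := hQe1 ⟨z₁, hz₁⟩
    -- ratios along the segment are in the ball around 1
    have hratio : ∀ u : ℝ, f (σ.extend u) / h z₁ ∈ Metric.ball (1:ℂ) 1 := by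
      intro u
      have : σ.extend u = σ (Set.projIcc 0 1 zero_le_one u) := rfl
      rw [this]
      refine ratio_mem_ball (hz z₁ hz₁) ?_
      exact hnear _ (hmem _)
    have hratio_ne : ∀ u : ℝ, f (σ.extend u) / h z₁ ≠ 0 :=
      fun u => Complex.slitPlane_ne_zero (Complex.ball_one_subset_slitPlane (hratio u))
    set q' : ℝ → ℂ := fun u => q 1 + Complex.log (f (σ.extend u) / h z₁) with hq'
    have hq'c : Continuous q' := by
      refine continuous_const.add ?_
      rw [continuous_iff_continuousAt]
      intro u
      refine ContinuousAt.clog ?_ (Complex.ball_one_subset_slitPlane (hratio u))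
      exact ((hfc.comp σ.continuous_extend).div_const _).continuousAt
    have hq'0 : q' 0 = q 1 := by
      rw [hq']
      simp only
      rw [Path.extend_zero]
      have : f (⟨z₁, hz₁⟩ : ↥D) = h z₁ := rfl
      rw [this, div_self (hz z₁ hz₁), Complex.log_one, add_zero]
    set Qt : ℝ → ℂ := fun u => if u ≤ (1:ℝ)/2 then q (2*u) else q' (2*u - 1) with hQt
    have hQtc : Continuous Qt := by
      apply Continuous.if_le
      · exact (hQc _).comp (continuous_const.mul continuous_id)
      · exact hq'c.comp ((continuous_const.mul continuous_id).sub continuous_const)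
      · exact continuous_id
      · exact continuous_const
      · intro u hu
        rw [hu]
        norm_num
        rw [hq'0]
    have hQt0 : Qt 0 = Complex.log (f b) := by
      rw [hQt]
      norm_num
      exact hQ0 _
    have hQte : ∀ t : unitInterval, Complex.exp (Qt ↑t) = f ((γ.trans σ) t) := by
      intro t
      rw [Path.trans_apply, hQt]
      simp only
      split_ifs with h'
      · have := hQe ⟨z₁, hz₁⟩ ⟨2 * ↑t, (unitInterval.mul_pos_mem_iff zero_lt_two).2 ⟨t.2.1, h'⟩⟩
        exact this
      · have h2t : (2 * (t:ℝ) - 1) ∈ Set.Icc (0:ℝ) 1 :=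
          unitInterval.two_mul_sub_one_mem_iff.2 ⟨(not_le.1 h').le, t.2.2⟩
        rw [Complex.exp_add, hq1, Complex.exp_log (hratio_ne _),
          Path.extend_apply σ h2t]
        rw [mul_comm, div_mul_cancel₀ _ (hz z₁ hz₁)]
    have hend := keyWD ⟨z, hzD⟩ (γ.trans σ) Qt hQtc hQt0 hQte
    have hQt1 : Qt 1 = q 1 + Complex.log (h z / h z₁) := by
      have hne : ¬ ((1:ℝ) ≤ 1/2) := by norm_num
      rw [hQt]
      simp only [if_neg hne, hq']
      have h21 : (2:ℝ) * 1 - 1 = 1 := by norm_num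
      rw [h21, Path.extend_one]
    rw [hℓD z hzD, hℓD z₁ hz₁, ← hend, hQt1]
  -- assemble the answer
  refine ⟨fun z => Complex.exp ((s:ℂ) * ℓ z), ?_, ?_, ?_⟩
  · intro z₁ hz₁
    obtain ⟨r, hr, hballD, hloc⟩ := localF z₁ hz₁
    have hev : (fun z => Complex.exp ((s:ℂ) * ℓ z)) =ᶠ[nhds z₁]
        fun z => Complex.exp ((s:ℂ) * (ℓ z₁ + Complex.log (h z / h z₁))) := by
      filter_upwards [Metric.ball_mem_nhds z₁ hr] with z hzb
      rw [hloc z hzb]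
    have hdiff : DifferentiableAt ℂ
        (fun z => Complex.exp ((s:ℂ) * (ℓ z₁ + Complex.log (h z / h z₁)))) z₁ := by
      have hdh : DifferentiableAt ℂ (fun z => h z / h z₁) z₁ := by
        simp only [div_eq_mul_inv]
        exact (hh.differentiableAt (hopen.mem_nhds hz₁)).mul (differentiableAt_const _)
      have hmem : h z₁ / h z₁ ∈ Complex.slitPlane := by
        rw [div_self (hz z₁ hz₁)]
        exact Complex.one_mem_slitPlane
      have hdlog : DifferentiableAt ℂ (fun z => Complex.log (h z / h z₁)) z₁ :=
        hdh.clog hmem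
      exact ((hdlog.const_add _).const_mul _).cexp
    exact ((hev.differentiableAt_iff).2 hdiff).differentiableWithinAt
  · exact fun z _ => Complex.exp_ne_zero _
  · intro z hz'
    have hre : (ℓ z).re = Real.log ‖h z‖ := by
      have : ‖h z‖ = Real.exp ((ℓ z).re) := by
        rw [← hexpℓ z hz', Complex.norm_exp]
      rw [this, Real.log_exp]
    rw [Complex.norm_exp, Complex.re_ofReal_mul, hre,
      Real.rpow_def_of_pos (norm_pos_iff.mpr (hz z hz')), mul_comm]
end

section
/- Let Ω₁ ⊆ ℝ^{d₁} and Ω₂ ⊆ ℝ^{d₂} be bounded open sets with open neighborhoods U ⊇ cl(Ω₁), V ⊇ cl(Ω₂), and C¹ defining functions ρ₁ : U → ℝ, ρ₂ : V → ℝ. Let Ξ : U → ℝ^{d₂} be a C¹ map with Ξ(U) ⊆ V and Ξ(∂Ω₁) ⊆ ∂Ω₂, and let x ∈ ∂Ω₁. Then Ξ is transverse to ∂Ω₂ at x — i.e. the image of the differential D_xΞ together with the kernel of the differential of ρ₂ at Ξ(x) spans ℝ^{d₂} — if and only if ⟨∇ρ₁(x), ∇(ρ₂ ∘ Ξ)(x)⟩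 ≠ 0, where ∇ denotes the gradient and ⟨·,·⟩ the Euclidean inner product. -/
open Filter Topology

private lemma aux_sup_iff {E F : Type*} [NormedAddCommGroup E] [NormedSpace ℝ E]
    [NormedAddCommGroup F] [NormedSpace ℝ F]
    (A : E →L[ℝ] F) (L : F →L[ℝ] ℝ) (hL : L ≠ 0) :
    (LinearMap.range (A : E →ₗ[ℝ] F) ⊔ LinearMap.ker (L : F →ₗ[ℝ] ℝ) = ⊤) ↔ L.comp A ≠ 0 := by
  constructor
  · intro htop hc
    have hsub : LinearMap.range (A : E →ₗ[ℝ] F) ≤ LinearMap.ker (L : F →ₗ[ℝ] ℝ) := by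
      rintro _ ⟨v, rfl⟩
      simpa using DFunLike.congr_fun hc v
    rw [sup_eq_right.2 hsub] at htop
    apply hL
    ext w
    simpa using htop.ge (Submodule.mem_top (x := w))
  · intro hc
    obtain ⟨v, hv⟩ : ∃ v, L (A v) ≠ 0 := by
      by_contra hall
      push_neg at hall
      exact hc (by ext v; simpa using hall v)
    rw [eq_top_iff]
    intro w _
    rw [Submodule.mem_sup]
    refine ⟨(L w / L (A v)) • A v, ?_, w - (L w / L (A v)) • A v, ?_, by abel⟩
    · exact Submodule.smul_mem _ _ (LinearMap.mem_range_self _ v)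
    · simp [LinearMap.mem_ker, div_mul_cancel₀ _ hv]

private lemma aux_range_top {E : Type*} [NormedAddCommGroup E] [NormedSpace ℝ E]
    (L : E →L[ℝ] ℝ) (hL : L ≠ 0) : LinearMap.range (L : E →ₗ[ℝ] ℝ) = ⊤ := by
  obtain ⟨v, hv⟩ : ∃ v, L v ≠ 0 := by
    by_contra hall
    push_neg at hall
    exact hL (by ext v; simpa using hall v)
  rw [eq_top_iff]
  intro c _
  exact ⟨(c / L v) • v, by simp [div_mul_cancel₀ _ hv]⟩

private lemma aux_key_ker {E : Type*} [NormedAddCommGroup E] [NormedSpace ℝ E] [CompleteSpace E]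
    {g h : E → ℝ} {x : E}
    (hg : HasStrictFDerivAt g (fderiv ℝ g x) x)
    (hgsurj : LinearMap.range (fderiv ℝ g x : E →ₗ[ℝ] ℝ) = ⊤)
    (hh : DifferentiableAt ℝ h x)
    (hvan : ∀ᶠ z in 𝓝 x, g z = g x → h z = 0)
    {v : E} (hv : fderiv ℝ g x v = 0) : fderiv ℝ h x v = 0 := by
  set f' := fderiv ℝ g x with hf'
  set K := LinearMap.ker (f' : E →ₗ[ℝ] ℝ) with hK
  set γ : K → E := hg.implicitFunction g f' hgsurj (g x) with hγ
  have hγ0 : γ 0 = x := hg.implicitFunction_apply_image hgsurj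
  have hγder : HasStrictFDerivAt γ K.subtypeL 0 := hg.to_implicitFunction hgsurj
  have hgγ : ∀ᶠ y in 𝓝 (0 : K), g (γ y) = g x := by
    have ht : Tendsto (fun y : K => ((g x : ℝ), y)) (𝓝 0) (𝓝 (g x, 0)) :=
      tendsto_const_nhds.prodMk_nhds tendsto_id
    exact ht.eventually (hg.map_implicitFunction_eq hgsurj)
  have hvanγ : ∀ᶠ y in 𝓝 (0 : K), g (γ y) = g x → h (γ y) = 0 := by
    have hc : ContinuousAt γ 0 := hγder.continuousAt
    have h2 : ∀ᶠ z in 𝓝 (γ 0), g z = g (γ 0) → h z = 0 := by rw [hγ0]; exact hvan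
    simpa only [hγ0] using hc.eventually h2
  have hzero : (fun y => h (γ y)) =ᶠ[𝓝 (0 : K)] fun _ => (0 : ℝ) :=
    hgγ.mp (hvanγ.mono fun y hy hy' => hy hy')
  have hcomp : HasFDerivAt (fun y => h (γ y)) ((fderiv ℝ h x).comp K.subtypeL) 0 := by
    have hh' : HasFDerivAt h (fderiv ℝ h x) (γ 0) := hγ0 ▸ hh.hasFDerivAt
    exact hh'.comp 0 hγder.hasFDerivAt
  have h0 : (fderiv ℝ h x).comp K.subtypeL = 0 := by
    rw [← hcomp.fderiv, hzero.fderiv_eq, fderiv_const_apply]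
  have := DFunLike.congr_fun h0 (⟨v, hv⟩ : K)
  simpa using this

/-- Transversality of `Ξ` to `∂Ω₂` at `x ∈ ∂Ω₁` is equivalent to
`⟨∇ρ₁(x), ∇(ρ₂ ∘ Ξ)(x)⟩ ≠ 0`. -/
theorem transversality_iff_inner_ne_zero (d₁ d₂ : ℕ)
    (Ω₁ U : Set (EuclideanSpace ℝ (Fin d₁)))
    (Ω₂ V : Set (EuclideanSpace ℝ (Fin d₂)))
    (ρ₁ : EuclideanSpace ℝ (Fin d₁) → ℝ) (ρ₂ : EuclideanSpace ℝ (Fin d₂) → ℝ)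
    (Ξ : EuclideanSpace ℝ (Fin d₁) → EuclideanSpace ℝ (Fin d₂))
    (hΩ₁o : IsOpen Ω₁) (hΩ₁b : Bornology.IsBounded Ω₁)
    (hΩ₂o : IsOpen Ω₂) (hΩ₂b : Bornology.IsBounded Ω₂)
    (hUo : IsOpen U) (hUcl : closure Ω₁ ⊆ U)
    (hVo : IsOpen V) (hVcl : closure Ω₂ ⊆ V)
    (hρ₁C1 : ContDiffOn ℝ 1 ρ₁ U)
    (hρ₁pos : Ω₁ = {x ∈ U | 0 < ρ₁ x})
    (hρ₁bd : frontier Ω₁ = {x ∈ U | ρ₁ x = 0})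
    (hρ₁grad : ∀ x ∈ frontier Ω₁, fderiv ℝ ρ₁ x ≠ 0)
    (hρ₂C1 : ContDiffOn ℝ 1 ρ₂ V)
    (hρ₂pos : Ω₂ = {x ∈ V | 0 < ρ₂ x})
    (hρ₂bd : frontier Ω₂ = {x ∈ V | ρ₂ x = 0})
    (hρ₂grad : ∀ x ∈ frontier Ω₂, fderiv ℝ ρ₂ x ≠ 0)
    (hΞC1 : ContDiffOn ℝ 1 Ξ U)
    (hΞUV : Ξ '' U ⊆ V)
    (hΞbd : Ξ '' frontier Ω₁ ⊆ frontier Ω₂)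
    (x : EuclideanSpace ℝ (Fin d₁)) (hx : x ∈ frontier Ω₁) :
    (LinearMap.range (fderiv ℝ Ξ x : EuclideanSpace ℝ (Fin d₁) →ₗ[ℝ] EuclideanSpace ℝ (Fin d₂)) ⊔ LinearMap.ker (fderiv ℝ ρ₂ (Ξ x) : EuclideanSpace ℝ (Fin d₂) →ₗ[ℝ] ℝ) = ⊤) ↔
    (inner ℝ (gradient ρ₁ x) (gradient (fun y => ρ₂ (Ξ y)) x) : ℝ) ≠ 0 := by
  classical
  have hxU : x ∈ U := hUcl (frontier_subset_closure hx)
  have hΞxfr : Ξ x ∈ frontier Ω₂ := hΞbd ⟨x, hx, rfl⟩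
  have hΞxV : Ξ x ∈ V := hVcl (frontier_subset_closure hΞxfr)
  set h : EuclideanSpace ℝ (Fin d₁) → ℝ := fun y => ρ₂ (Ξ y) with hhdef
  have hρ₁x : ρ₁ x = 0 := by
    have := hρ₁bd ▸ hx; exact this.2
  have hΞdiff : DifferentiableAt ℝ Ξ x :=
    (hΞC1.contDiffAt (hUo.mem_nhds hxU)).differentiableAt one_ne_zero
  have hρ₂diff : DifferentiableAt ℝ ρ₂ (Ξ x) :=
    (hρ₂C1.contDiffAt (hVo.mem_nhds hΞxV)).differentiableAt one_ne_zero
  have hhdiff : DifferentiableAt ℝ h x := hρ₂diff.comp x hΞdiff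
  have hchain : fderiv ℝ h x = (fderiv ℝ ρ₂ (Ξ x)).comp (fderiv ℝ Ξ x) :=
    fderiv_comp x hρ₂diff hΞdiff
  have hg : HasStrictFDerivAt ρ₁ (fderiv ℝ ρ₁ x) x :=
    (hρ₁C1.contDiffAt (hUo.mem_nhds hxU)).hasStrictFDerivAt one_ne_zero
  have hgne : fderiv ℝ ρ₁ x ≠ 0 := hρ₁grad x hx
  have hLne : fderiv ℝ ρ₂ (Ξ x) ≠ 0 := hρ₂grad _ hΞxfr
  have hgsurj := aux_range_top _ hgne
  have hvan : ∀ᶠ z in 𝓝 x, ρ₁ z = ρ₁ x → h z = 0 := by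
    filter_upwards [hUo.mem_nhds hxU] with z hzU hz
    have hzfr : z ∈ frontier Ω₁ := by
      rw [hρ₁bd]; exact ⟨hzU, by rw [hz, hρ₁x]⟩
    have hΞz : Ξ z ∈ frontier Ω₂ := hΞbd ⟨z, hzfr, rfl⟩
    rw [hρ₂bd] at hΞz
    exact hΞz.2
  have hker : ∀ v, fderiv ℝ ρ₁ x v = 0 → fderiv ℝ h x v = 0 :=
    fun v hv => aux_key_ker hg hgsurj hhdiff hvan hv
  obtain ⟨u, hu⟩ : ∃ u, fderiv ℝ ρ₁ x u ≠ 0 := by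
    by_contra hall
    push_neg at hall
    exact hgne (by ext v; simpa using hall v)
  set c : ℝ := fderiv ℝ h x u / fderiv ℝ ρ₁ x u with hcdef
  have hc : fderiv ℝ h x = c • fderiv ℝ ρ₁ x := by
    ext w
    have hw : fderiv ℝ ρ₁ x (w - (fderiv ℝ ρ₁ x w / fderiv ℝ ρ₁ x u) • u) = 0 := by
      simp [map_sub, map_smul, smul_eq_mul, div_mul_cancel₀ _ hu]
    have h2 := hker _ hw
    rw [map_sub, map_smul, smul_eq_mul, sub_eq_zero] at h2
    simp only [ContinuousLinearMap.smul_apply, smul_eq_mul]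
    rw [h2, hcdef]
    ring
  -- gradient facts
  have hgrad : ∀ (f : EuclideanSpace ℝ (Fin d₁) → ℝ) (v : EuclideanSpace ℝ (Fin d₁)),
      (inner ℝ (gradient f x) v : ℝ) = fderiv ℝ f x v := by
    intro f v
    exact InnerProductSpace.toDual_symm_apply
  have hgradne : gradient ρ₁ x ≠ 0 := by
    intro h0
    apply hgne
    have : (InnerProductSpace.toDual ℝ (EuclideanSpace ℝ (Fin d₁))) (gradient ρ₁ x) = fderiv ℝ ρ₁ x := by
      simp [gradient]
    rw [h0] at this
    rw [← this]
    simp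
  have hinner : (inner ℝ (gradient ρ₁ x) (gradient h x) : ℝ)
      = c * ‖gradient ρ₁ x‖ ^ 2 := by
    rw [real_inner_comm, hgrad h (gradient ρ₁ x), hc]
    simp only [ContinuousLinearMap.smul_apply, smul_eq_mul]
    rw [← hgrad ρ₁ (gradient ρ₁ x), real_inner_self_eq_norm_sq]
  have hcne_iff : fderiv ℝ h x ≠ 0 ↔ c ≠ 0 := by
    constructor
    · intro hne hc0
      exact hne (by rw [hc, hc0, zero_smul])
    · intro hc0 h0
      apply hc0
      have := DFunLike.congr_fun (h0 ▸ hc) u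
      simp only [ContinuousLinearMap.smul_apply, smul_eq_mul,
        ContinuousLinearMap.zero_apply] at this
      rcases mul_eq_zero.1 this.symm with h' | h'
      · exact h'
      · exact absurd h' hu
  rw [aux_sup_iff _ _ hLne, ← hchain, hcne_iff, hinner]
  have hnorm : ‖gradient ρ₁ x‖ ^ 2 ≠ 0 := pow_ne_zero _ (norm_ne_zero_iff.2 hgradne)
  constructor
  · intro hc0
    exact mul_ne_zero hc0 hnorm
  · intro hne hc0
    exact hne (by rw [hc0, zero_mul])
end

section
/- Let n ≥ 1 and m ≥ 0 be natural numbers, let C > 0 be real, and let c_0, …, c_n ∈ ℝ satisfy c_n ≠ 0 and ∑_{j=0}^{n} c_j·(j+m)! = 1. Let μ be a positive rational number. Suppose there exist a polynomial p ∈ ℝ[X] and ε > 0 such that for every real x with |x| < ε one has (1 − Cx)^{μ(n+m+1)} · (∑_{j=0}^{n} c_j·(j+m)!·(1 − Cx)^{n−j})^{−μ} = p(x), where the powers with real exponents are real powers (the bases being positive for |x| small). Then c_j = 0 for every j ∈ {0, 1, …, n−1}, and consequently c_n·(n+m)! = 1. -/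
open Polynomial


/-- If `(1 − Cx)^{μ(n+m+1)} (∑_{j=0}^{n} c_j (j+m)! (1 − Cx)^{n−j})^{−μ}`
agrees with a polynomial near `0`, where `μ ∈ ℚ`, `μ > 0`, `c_n ≠ 0` and
`∑ c_j (j+m)! = 1`, then `c_j = 0` for `j < n` and `c_n (n+m)! = 1`. -/
theorem rescaled_hartogs_coefficients (n m : ℕ) (hn : 1 ≤ n)
    (C : ℝ) (hC : 0 < C) (c : ℕ → ℝ) (hcn : c n ≠ 0)
    (hsum : ∑ j ∈ Finset.range (n + 1), c j * ((j + m).factorial : ℝ) = 1)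
    (μ : ℚ) (hμ : 0 < μ)
    (hp : ∃ p : Polynomial ℝ, ∃ ε > (0 : ℝ), ∀ x : ℝ, |x| < ε →
      (1 - C * x) ^ ((μ : ℝ) * ((n : ℝ) + (m : ℝ) + 1)) *
        (∑ j ∈ Finset.range (n + 1),
            c j * ((j + m).factorial : ℝ) * (1 - C * x) ^ (n - j)) ^ (-(μ : ℝ))
        = p.eval x) :
    (∀ j < n, c j = 0) ∧ c n * ((n + m).factorial : ℝ) = 1 := by
  classical
  obtain ⟨p, ε, hε, hpx⟩ := hp
  set a : ℕ := μ.num.toNat with ha_def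
  set b : ℕ := μ.den with hb_def
  have ha_pos : 0 < a := by
    have := Rat.num_pos.mpr hμ
    omega
  have hb_pos : 0 < b := μ.pos
  have hab : (μ : ℝ) * (b : ℝ) = (a : ℝ) := by
    have h1 : ((μ.num : ℝ)) = (a : ℝ) := by
      have := Rat.num_pos.mpr hμ
      rw [ha_def]
      exact_mod_cast (Int.toNat_of_nonneg this.le).symm
    rw [Rat.cast_def, ← h1]
    field_simp
    rw [hb_def]
  -- the function F
  set F : ℝ → ℝ := fun x => ∑ j ∈ Finset.range (n + 1),
      c j * ((j + m).factorial : ℝ) * (1 - C * x) ^ (n - j) with hF_def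
  have hF0 : F 0 = 1 := by
    simp only [hF_def, mul_zero, sub_zero, one_pow, mul_one]
    exact hsum
  have hFcont : Continuous F := by
    apply continuous_finset_sum
    intro i _
    fun_prop
  -- F is positive near 0
  have hFev : ∀ᶠ x in nhds (0 : ℝ), 0 < F x := by
    have : Set.EqOn F F Set.univ := fun x _ => rfl
    have := hFcont.continuousAt (x := (0:ℝ))
    have h := this.eventually_mem (s := Set.Ioi (0:ℝ)) (by rw [hF0]; exact Ioi_mem_nhds one_pos)
    exact h
  obtain ⟨δ, hδ, hFδ⟩ := Metric.eventually_nhds_iff.mp hFev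
  -- choose a small radius
  set ε' : ℝ := min ε (min δ (1 / C)) with hε'_def
  have hε' : 0 < ε' := by
    apply lt_min hε
    exact lt_min hδ (by positivity)
  have key : ∀ x : ℝ, |x| < ε' →
      (1 - C * x) ^ (a * (n + m + 1)) = p.eval x ^ b * (F x) ^ a := by
    intro x hx
    have hx1 : |x| < ε := lt_of_lt_of_le hx (min_le_left _ _)
    have hx2 : |x| < δ := lt_of_lt_of_le hx ((min_le_right _ _).trans (min_le_left _ _))
    have hx3 : |x| < 1 / C := lt_of_lt_of_le hx ((min_le_right _ _).trans (min_le_right _ _))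
    have hA : 0 < 1 - C * x := by
      have : C * x < 1 := by
        calc C * x ≤ C * |x| := by
              apply mul_le_mul_of_nonneg_left (le_abs_self x) hC.le
          _ < C * (1 / C) := by exact mul_lt_mul_of_pos_left hx3 hC
          _ = 1 := by field_simp
      linarith
    have hF : 0 < F x := by
      apply hFδ
      simpa [Real.dist_eq] using hx2
    have eq1 := hpx x hx1
    have eq2 : (1 - C * x) ^ ((μ : ℝ) * ((n : ℝ) + (m : ℝ) + 1)) = p.eval x * (F x) ^ (μ : ℝ) := by
      rw [← eq1, mul_assoc, ← Real.rpow_add hF]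
      simp
    have eq3 : ((1 - C * x) ^ ((μ : ℝ) * ((n : ℝ) + (m : ℝ) + 1))) ^ b
        = (p.eval x * (F x) ^ (μ : ℝ)) ^ b := by rw [eq2]
    calc (1 - C * x) ^ (a * (n + m + 1))
        = (1 - C * x) ^ (((a * (n + m + 1) : ℕ) : ℝ)) := (Real.rpow_natCast _ _).symm
      _ = ((1 - C * x) ^ ((μ : ℝ) * ((n : ℝ) + (m : ℝ) + 1))) ^ b := by
          rw [← Real.rpow_natCast ((1 - C * x) ^ ((μ : ℝ) * ((n : ℝ) + (m : ℝ) + 1))) b,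
            ← Real.rpow_mul hA.le]
          congr 1
          push_cast [← hab]
          ring
      _ = (p.eval x * (F x) ^ (μ : ℝ)) ^ b := eq3
      _ = p.eval x ^ b * ((F x) ^ (μ : ℝ)) ^ b := mul_pow _ _ _
      _ = p.eval x ^ b * (F x) ^ a := by
          rw [← Real.rpow_natCast ((F x) ^ (μ : ℝ)) b, ← Real.rpow_mul hF.le, hab,
            Real.rpow_natCast]
  -- polynomials
  set L : ℝ[X] := 1 - Polynomial.C C * X with hL_def
  set S : ℝ[X] := ∑ j ∈ Finset.range (n + 1),
      Polynomial.C (c j * ((j + m).factorial : ℝ)) * L ^ (n - j) with hS_def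
  have hSeval : ∀ x : ℝ, S.eval x = F x := by
    intro x
    simp [hS_def, hL_def, hF_def, eval_finset_sum]
  have hpoly : L ^ (a * (n + m + 1)) = p ^ b * S ^ a := by
    apply Polynomial.eq_of_infinite_eval_eq
    apply Set.Infinite.mono (s := Set.Ioo (-ε') ε')
    · intro x hx
      have : |x| < ε' := by
        rw [abs_lt]; exact ⟨hx.1, hx.2⟩
      simp only [Set.mem_setOf_eq, eval_pow, eval_mul, hSeval, hL_def, eval_sub, eval_one,
        eval_mul, eval_C, eval_X]
      exact key x this
    · exact Set.Ioo_infinite (by linarith)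
  -- S divides a power of (X - C (1/C))
  have hLassoc : L = Polynomial.C (-C) * (X - Polynomial.C (C⁻¹)) := by
    rw [hL_def, mul_sub, Polynomial.C_neg, neg_mul, neg_mul, sub_neg_eq_add, neg_add_eq_sub,
      ← Polynomial.C_mul, mul_inv_cancel₀ hC.ne', Polynomial.C_1]
  have hSdvd : S ∣ (X - Polynomial.C (C⁻¹)) ^ (a * (n + m + 1)) := by
    have h1 : S ∣ L ^ (a * (n + m + 1)) := by
      rw [hpoly]
      exact Dvd.dvd.mul_left (dvd_pow_self S ha_pos.ne') _
    have h2 : L ^ (a * (n + m + 1)) = Polynomial.C ((-C) ^ (a * (n + m + 1))) *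
        (X - Polynomial.C (C⁻¹)) ^ (a * (n + m + 1)) := by
      rw [hLassoc, mul_pow, Polynomial.C_pow]
    rw [h2] at h1
    have hu : IsUnit (Polynomial.C ((-C) ^ (a * (n + m + 1)))) := by
      apply Polynomial.isUnit_C.mpr
      apply IsUnit.pow
      exact (isUnit_iff_ne_zero.mpr (by simpa using hC.ne'))
    exact (IsUnit.dvd_mul_left hu).mp h1
  obtain ⟨i, hi, hassoc⟩ := (dvd_prime_pow (Polynomial.prime_X_sub_C (C⁻¹)) _).mp hSdvd
  -- evaluate S at 1/C
  have hSC : S.eval C⁻¹ = c n * ((n + m).factorial : ℝ) := by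
    rw [hS_def]
    rw [eval_finset_sum]
    rw [Finset.sum_eq_single n]
    · simp [hL_def, mul_inv_cancel₀ hC.ne']
    · intro j hj hjn
      have hjn' : j < n := by
        simp only [Finset.mem_range] at hj; omega
      simp [hL_def, mul_inv_cancel₀ hC.ne', zero_pow (by omega : n - j ≠ 0)]
    · intro h
      exact absurd (Finset.self_mem_range_succ n) h
  have hi0 : i = 0 := by
    by_contra hi0
    have : (X - Polynomial.C (C⁻¹)) ∣ S := by
      have : (X - Polynomial.C (C⁻¹)) ∣ (X - Polynomial.C (C⁻¹)) ^ i :=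
        dvd_pow_self _ hi0
      exact this.trans hassoc.symm.dvd
    have := Polynomial.eval_eq_zero_of_dvd_of_eval_eq_zero this
      (show Polynomial.eval C⁻¹ (X - Polynomial.C C⁻¹) = 0 by simp)
    rw [hSC] at this
    exact hcn (by
      have := mul_eq_zero.mp this
      rcases this with h | h
      · exact h
      · exact absurd h (Nat.cast_ne_zero.mpr (Nat.factorial_ne_zero _)))
  rw [hi0, pow_zero] at hassoc
  have hSunit : IsUnit S := hassoc.symm.isUnit isUnit_one
  obtain ⟨r, hr, hrS⟩ := Polynomial.isUnit_iff.mp hSunit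
  -- S eval 0 = 1, so r = 1, S = 1
  have hS0 : S.eval 0 = 1 := by rw [hSeval, hF0]
  have hr1 : r = 1 := by
    have := hS0
    rw [← hrS] at this
    simpa using this
  have hS1 : S = 1 := by rw [← hrS, hr1, Polynomial.C_1]
  -- now the R polynomial
  set R : ℝ[X] := ∑ j ∈ Finset.range (n + 1),
      Polynomial.C (c j * ((j + m).factorial : ℝ)) * X ^ (n - j) with hR_def
  have hcomp : R.comp L = S := by
    rw [hR_def, hS_def, Polynomial.comp, Polynomial.eval₂_finset_sum]
    refine Finset.sum_congr rfl fun j _ => ?_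
    simp [Polynomial.eval₂_mul]
  have hLdeg : L.natDegree = 1 := by
    rw [hL_def]
    compute_degree!
    exact hC.ne'
  have hRdeg : R.natDegree = 0 := by
    have := Polynomial.natDegree_comp (p := R) (q := L)
    rw [hcomp, hS1, hLdeg] at this
    simpa using this.symm
  have hR1 : R = 1 := by
    have h0 : R = Polynomial.C (R.coeff 0) := Polynomial.eq_C_of_natDegree_eq_zero hRdeg
    rw [h0] at hcomp
    rw [Polynomial.C_comp] at hcomp
    rw [h0, hcomp, hS1]
  have hcj : ∀ j < n, c j * ((j + m).factorial : ℝ) = 0 := by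
    intro j hj
    have hcoeff : R.coeff (n - j) = c j * ((j + m).factorial : ℝ) := by
      rw [hR_def, Polynomial.finset_sum_coeff]
      rw [Finset.sum_eq_single j]
      · rw [Polynomial.coeff_C_mul, Polynomial.coeff_X_pow, if_pos rfl, mul_one]
      · intro j' hj' hjj'
        simp only [Finset.mem_range] at hj'
        rw [Polynomial.coeff_C_mul, Polynomial.coeff_X_pow, if_neg (by omega), mul_zero]
      · intro h
        exact absurd (Finset.mem_range.mpr (by omega)) h
    rw [hR1] at hcoeff
    rw [Polynomial.coeff_one, if_neg (by omega)] at hcoeff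
    exact hcoeff.symm
  have hcj' : ∀ j < n, c j = 0 := by
    intro j hj
    have := hcj j hj
    rcases mul_eq_zero.mp this with h | h
    · exact h
    · exact absurd h (Nat.cast_ne_zero.mpr (Nat.factorial_ne_zero _))
  refine ⟨hcj', ?_⟩
  rw [Finset.sum_range_succ] at hsum
  rw [Finset.sum_eq_zero (fun j hj => by
    rw [hcj' j (Finset.mem_range.mp hj), zero_mul]), zero_add] at hsum
  exact hsum
end
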